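/- The function f(t) = ₂F₁(1/3, 2/3; 1; t) / ₂F₁(1/3, 2/3; 1; 1-t) is a strictly increasing continuous bijection from (0,1) onto (0,∞). In particular, for every positive real r there exists a unique t ∈ (0,1) with f(t) = r. -/

import Mathlib

/-!
Up to the positive factor `Γ(1) / (Γ(2/3) Γ(1/3))`, `F(z) = ₂F₁(1/3, 2/3; 1; z)` is the Euler
integral `∫₀¹ t^(-1/3) (1-t)^(-2/3) (1 - z t)^(-1/3) dt`. For `z < 1` it is positive, continuous
(dominated convergence) and strictly increasing in `z`. It tends to `+∞` as `z → 1⁻`: on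
`[1/2, z]` one has `1 - z t ≤ 2 (1 - t)`, so the integrand is at least `2^(-1/3) (1 - t)⁻¹`,
whose integral is `2^(-1/3) log (1 / (2 (1 - z)))`. Hence `F(t) / F(1 - t)` is continuous and
strictly increasing on `(0, 1)`, tends to `0` at `0` and to `+∞` at `1`, and the intermediate
value theorem makes it onto `(0, ∞)`.
-/

open Real Set

/-- Gauss hypergeometric function `₂F₁(a,b;c;z)` via the Euler integral
representation, valid for `c > b > 0` (and all real `z < 1`). -/
noncomputable def hyp2F1 (a b c z : ℝ) : ℝ :=
  (Real.Gamma c / (Real.Gamma b * Real.Gamma (c - b))) *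
    ∫ t in (0:ℝ)..1, t ^ (b - 1) * (1 - t) ^ (c - b - 1) * (1 - z * t) ^ (-a)

noncomputable def fratio (t : ℝ) : ℝ :=
  hyp2F1 (1/3) (2/3) 1 t / hyp2F1 (1/3) (2/3) 1 (1 - t)

open MeasureTheory Filter Topology

lemma intervalIntegrable_rpow_mul_one_sub_rpow {p q : ℝ} (hp : -1 < p) (hq : -1 < q) :
    IntervalIntegrable (fun x => x ^ p * (1 - x) ^ q) volume 0 1 := by
  have left : ∀ {p q : ℝ}, -1 < p →
      IntervalIntegrable (fun x => x ^ p * (1 - x) ^ q) volume 0 (1/2) := fun hp =>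
    (intervalIntegral.intervalIntegrable_rpow' hp).mul_continuousOn <|
      (continuousOn_const.sub continuousOn_id).rpow_const fun x hx => by
        rw [uIcc_of_le (by norm_num)] at hx
        exact Or.inl (show (1:ℝ) - x ≠ 0 by linarith [hx.2])
  have right := (left (q := p) hq).comp_sub_left 1
  rw [sub_zero, show (1:ℝ) - 1/2 = 1/2 by norm_num] at right
  simp only [sub_sub_cancel] at right
  exact (left hp).trans (by simpa only [mul_comm] using right.symm)

noncomputable def eulerKernel (a b c z t : ℝ) : ℝ :=
  t ^ (b - 1) * (1 - t) ^ (c - b - 1) * (1 - z * t) ^ (-a)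

section EulerKernel

variable {a b c z w t : ℝ}

lemma hyp2F1_eq_mul_integral (a b c z : ℝ) : hyp2F1 a b c z =
    Gamma c / (Gamma b * Gamma (c - b)) * ∫ t in (0:ℝ)..1, eulerKernel a b c z t := rfl

lemma Gamma_div_Gamma_mul_Gamma_sub_pos (hb : 0 < b) (hcb : b < c) :
    0 < Gamma c / (Gamma b * Gamma (c - b)) :=
  div_pos (Gamma_pos_of_pos (hb.trans hcb))
    (mul_pos (Gamma_pos_of_pos hb) (Gamma_pos_of_pos (sub_pos.2 hcb)))

lemma one_sub_mul_pos (hz : z < 1) (ht : t ∈ Icc (0:ℝ) 1) : 0 < 1 - z * t := by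
  rcases le_or_gt z 0 with h | h <;> nlinarith [ht.1, ht.2]

lemma eulerKernel_nonneg (hz : z < 1) (ht : t ∈ Icc (0:ℝ) 1) : 0 ≤ eulerKernel a b c z t :=
  mul_nonneg (mul_nonneg (rpow_nonneg ht.1 _) (rpow_nonneg (sub_nonneg.2 ht.2) _))
    (rpow_nonneg (one_sub_mul_pos hz ht).le _)

lemma eulerKernel_pos (hz : z < 1) (ht : t ∈ Ioo (0:ℝ) 1) : 0 < eulerKernel a b c z t :=
  mul_pos (mul_pos (rpow_pos_of_pos ht.1 _) (rpow_pos_of_pos (sub_pos.2 ht.2) _))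
    (rpow_pos_of_pos (one_sub_mul_pos hz (Ioo_subset_Icc_self ht)) _)

lemma eulerKernel_le_of_le (ha : 0 ≤ a) (hzw : z ≤ w) (hw : w < 1) (ht : t ∈ Icc (0:ℝ) 1) :
    eulerKernel a b c z t ≤ eulerKernel a b c w t :=
  mul_le_mul_of_nonneg_left
    (rpow_le_rpow_of_nonpos (one_sub_mul_pos hw ht) (by nlinarith [ht.1]) (neg_nonpos.2 ha))
    (mul_nonneg (rpow_nonneg ht.1 _) (rpow_nonneg (sub_nonneg.2 ht.2) _))

lemma eulerKernel_lt_of_lt (ha : 0 < a) (hzw : z < w) (hw : w < 1) (ht : t ∈ Ioo (0:ℝ) 1) :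
    eulerKernel a b c z t < eulerKernel a b c w t :=
  mul_lt_mul_of_pos_left
    (rpow_lt_rpow_of_neg (one_sub_mul_pos hw (Ioo_subset_Icc_self ht)) (by nlinarith [ht.1])
      (neg_neg_iff_pos.2 ha))
    (mul_pos (rpow_pos_of_pos ht.1 _) (rpow_pos_of_pos (sub_pos.2 ht.2) _))

lemma intervalIntegrable_eulerKernel (hb : 0 < b) (hcb : b < c) (hz : z < 1) :
    IntervalIntegrable (eulerKernel a b c z) volume 0 1 :=
  (intervalIntegrable_rpow_mul_one_sub_rpow (by linarith) (by linarith)).mul_continuousOn <|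
    (continuousOn_const.sub (continuousOn_const.mul continuousOn_id)).rpow_const fun t ht => by
      rw [uIcc_of_le zero_le_one] at ht
      exact Or.inl (show 1 - z * t ≠ 0 from (one_sub_mul_pos hz ht).ne')

lemma inv_one_sub_le_eulerKernel (ha : 0 ≤ a) (hb1 : b ≤ 1) (hc : c ≤ a + b)
    (hz : z < 1) (ht : t ∈ Icc (1/2 : ℝ) z) :
    2 ^ (-a) * (1 - t)⁻¹ ≤ eulerKernel a b c z t := by
  obtain ⟨ht₁, ht₂⟩ := ht
  have h1t : 0 < 1 - t := by linarith
  have hzt : 0 < 1 - z * t := one_sub_mul_pos hz ⟨by linarith, by linarith⟩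
  have hbase : 1 ≤ t ^ (b - 1) :=
    one_le_rpow_of_pos_of_le_one_of_nonpos (by linarith) (by linarith) (by linarith)
  have hexp : (1 - t)⁻¹ ≤ (1 - t) ^ (c - b - 1 - a) := by
    rw [← rpow_neg_one]
    exact rpow_le_rpow_of_exponent_ge h1t (by linarith) (by linarith)
  have hsing : 2 ^ (-a) * (1 - t) ^ (-a) ≤ (1 - z * t) ^ (-a) := by
    rw [← mul_rpow zero_le_two h1t.le]
    exact rpow_le_rpow_of_nonpos hzt (by nlinarith) (neg_nonpos.2 ha)
  calc 2 ^ (-a) * (1 - t)⁻¹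
      ≤ 1 * ((1 - t) ^ (c - b - 1) * (2 ^ (-a) * (1 - t) ^ (-a))) := by
        rw [one_mul, mul_left_comm, ← rpow_add h1t, ← sub_eq_add_neg]
        gcongr
    _ ≤ t ^ (b - 1) * ((1 - t) ^ (c - b - 1) * (1 - z * t) ^ (-a)) := by
        gcongr
    _ = eulerKernel a b c z t := by rw [eulerKernel, mul_assoc]

lemma log_le_integral_eulerKernel (ha : 0 ≤ a) (hb : 0 < b) (hb1 : b ≤ 1) (hcb : b < c)
    (hc : c ≤ a + b) (hz : z ∈ Ico (1/2 : ℝ) 1) :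
    2 ^ (-a) * log ((1/2) / (1 - z)) ≤ ∫ t in (0:ℝ)..1, eulerKernel a b c z t := by
  obtain ⟨hz₁, hz₂⟩ := hz
  have hint : IntervalIntegrable (eulerKernel a b c z) volume 0 1 :=
    intervalIntegrable_eulerKernel hb hcb hz₂
  have hsub : uIcc (1/2 : ℝ) z ⊆ uIcc 0 1 := by
    rw [uIcc_of_le hz₁, uIcc_of_le zero_le_one]
    exact Icc_subset_Icc (by norm_num) hz₂.le
  have hlog : ∫ t in (1/2:ℝ)..z, (1 - t)⁻¹ = log ((1/2) / (1 - z)) := by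
    rw [intervalIntegral.integral_comp_sub_left (fun u : ℝ => u⁻¹) 1, integral_inv]
    · norm_num
    · rw [uIcc_of_le (by linarith)]
      exact fun h => by linarith [h.1]
  calc 2 ^ (-a) * log ((1/2) / (1 - z))
      = ∫ t in (1/2:ℝ)..z, 2 ^ (-a) * (1 - t)⁻¹ := by
        rw [intervalIntegral.integral_const_mul, hlog]
    _ ≤ ∫ t in (1/2:ℝ)..z, eulerKernel a b c z t := by
        refine intervalIntegral.integral_mono_on hz₁ ?_ (hint.mono_set hsub)
          fun t ht => inv_one_sub_le_eulerKernel ha hb1 hc hz₂ ht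
        refine (continuousOn_const.mul ((continuousOn_const.sub continuousOn_id).inv₀
          fun t ht => ?_)).intervalIntegrable
        rw [uIcc_of_le hz₁] at ht
        exact show (1:ℝ) - t ≠ 0 by linarith [ht.2]
    _ ≤ ∫ t in (0:ℝ)..1, eulerKernel a b c z t :=
        intervalIntegral.integral_mono_interval (by norm_num) hz₁ hz₂.le
          ((ae_restrict_mem measurableSet_Ioc).mono fun t ht =>
            eulerKernel_nonneg hz₂ (Ioc_subset_Icc_self ht)) hint

lemma hyp2F1_pos (hb : 0 < b) (hcb : b < c) (hz : z < 1) : 0 < hyp2F1 a b c z :=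
  mul_pos (Gamma_div_Gamma_mul_Gamma_sub_pos hb hcb) <|
    intervalIntegral.intervalIntegral_pos_of_pos_on (intervalIntegrable_eulerKernel hb hcb hz)
      (fun _ ht => eulerKernel_pos hz ht) one_pos

lemma hyp2F1_strictMonoOn (ha : 0 < a) (hb : 0 < b) (hcb : b < c) :
    StrictMonoOn (hyp2F1 a b c) (Iio 1) := by
  intro z hz w hw hzw
  have hzi := intervalIntegrable_eulerKernel (a := a) hb hcb hz
  have hwi := intervalIntegrable_eulerKernel (a := a) hb hcb hw
  have hdiff : 0 < ∫ t in (0:ℝ)..1, (eulerKernel a b c w t - eulerKernel a b c z t) :=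
    intervalIntegral.intervalIntegral_pos_of_pos_on (hwi.sub hzi)
      (fun t ht => sub_pos.2 (eulerKernel_lt_of_lt ha hzw hw ht)) one_pos
  rw [intervalIntegral.integral_sub hwi hzi, sub_pos] at hdiff
  rw [hyp2F1_eq_mul_integral, hyp2F1_eq_mul_integral]
  exact mul_lt_mul_of_pos_left hdiff (Gamma_div_Gamma_mul_Gamma_sub_pos hb hcb)

lemma hyp2F1_continuousOn (ha : 0 ≤ a) (hb : 0 < b) (hcb : b < c) :
    ContinuousOn (hyp2F1 a b c) (Iio 1) := by
  intro z₀ (hz₀ : z₀ < 1)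
  refine (continuousAt_const.mul ?_).continuousWithinAt
  obtain ⟨w, hz₀w, hw⟩ := exists_between hz₀
  refine intervalIntegral.continuousAt_of_dominated_interval (bound := eulerKernel a b c w)
    ?_ ?_ (intervalIntegrable_eulerKernel hb hcb hw) ?_
  · filter_upwards [Iio_mem_nhds hz₀w] with z hz
    exact (intervalIntegrable_eulerKernel hb hcb (hz.trans hw)).def'.aestronglyMeasurable
  · filter_upwards [Iio_mem_nhds hz₀w] with z (hz : z < w)
    refine ae_of_all _ fun t ht => ?_
    rw [uIoc_of_le zero_le_one] at ht
    change ‖eulerKernel a b c z t‖ ≤ _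
    rw [norm_of_nonneg (eulerKernel_nonneg (hz.trans hw) (Ioc_subset_Icc_self ht))]
    exact eulerKernel_le_of_le ha hz.le hw (Ioc_subset_Icc_self ht)
  · refine ae_of_all _ fun t ht => ?_
    rw [uIoc_of_le zero_le_one] at ht
    refine continuousAt_const.mul (ContinuousAt.rpow_const ?_ (Or.inl ?_))
    · fun_prop
    · exact (one_sub_mul_pos hz₀ (Ioc_subset_Icc_self ht)).ne'

lemma tendsto_hyp2F1_nhdsLT_one (ha : 0 ≤ a) (hb : 0 < b) (hb1 : b ≤ 1) (hcb : b < c)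
    (hc : c ≤ a + b) : Tendsto (hyp2F1 a b c) (𝓝[<] 1) atTop := by
  have hlog : Tendsto (fun z : ℝ => log ((1/2) / (1 - z))) (𝓝[<] 1) atTop := by
    refine tendsto_log_atTop.comp (Tendsto.const_mul_atTop (by norm_num) ?_)
    refine tendsto_inv_nhdsGT_zero.comp (tendsto_nhdsWithin_of_tendsto_nhds_of_eventually_within
      _ ?_ ?_)
    · exact ((continuous_const.sub continuous_id).tendsto' 1 0 (sub_self 1)).mono_left
        nhdsWithin_le_nhds
    · filter_upwards [self_mem_nhdsWithin] with z (hz : z < 1)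
      exact sub_pos.2 hz
  have hC := Gamma_div_Gamma_mul_Gamma_sub_pos hb hcb
  refine tendsto_atTop_mono' _ ?_
    ((hlog.const_mul_atTop (rpow_pos_of_pos two_pos (-a))).const_mul_atTop hC)
  filter_upwards [Ico_mem_nhdsLT (by norm_num : (1/2 : ℝ) < 1)] with z hz
  rw [hyp2F1_eq_mul_integral]
  exact mul_le_mul_of_nonneg_left (log_le_integral_eulerKernel ha hb hb1 hcb hc hz) hC.le

end EulerKernel

section ReflectionRatio

variable {F : ℝ → ℝ}

lemma strictMonoOn_div_comp_one_sub (hpos : ∀ z < 1, 0 < F z) (hF : StrictMonoOn F (Iio 1)) :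
    StrictMonoOn (fun t => F t / F (1 - t)) (Ioo 0 1) := by
  intro s ⟨hs₀, hs₁⟩ t ⟨ht₀, ht₁⟩ hst
  have hnum : F s < F t := hF hs₁ ht₁ hst
  have hden : F (1 - t) < F (1 - s) :=
    hF (by simpa using ht₀) (by simpa using hs₀) (by linarith)
  exact div_lt_div₀ hnum hden.le (hpos t ht₁).le (hpos _ (by linarith))

lemma continuousOn_div_comp_one_sub (hpos : ∀ z < 1, 0 < F z) (hF : ContinuousOn F (Iio 1)) :
    ContinuousOn (fun t => F t / F (1 - t)) (Ioo 0 1) :=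
  (hF.mono fun _ ht => ht.2).div
    (hF.comp (continuousOn_const.sub continuousOn_id) fun t ht => by simpa using ht.1)
    fun t ht => (hpos _ (by linarith [ht.1])).ne'

lemma tendsto_div_comp_one_sub_nhdsGT_zero (hF : ContinuousOn F (Iio 1))
    (htop : Tendsto F (𝓝[<] 1) atTop) :
    Tendsto (fun t => F t / F (1 - t)) (𝓝[>] 0) (𝓝 0) := by
  have hcont : ContinuousAt F 0 := hF.continuousAt (Iio_mem_nhds one_pos)
  refine (hcont.tendsto.mono_left nhdsWithin_le_nhds).div_atTop (htop.comp ?_)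
  refine tendsto_nhdsWithin_of_tendsto_nhds_of_eventually_within _
    (((continuous_const.sub continuous_id).tendsto' 0 1 (sub_zero 1)).mono_left
      nhdsWithin_le_nhds) ?_
  filter_upwards [self_mem_nhdsWithin] with t (ht : 0 < t)
  exact sub_lt_self 1 ht

lemma tendsto_div_comp_one_sub_nhdsLT_one (hpos : ∀ z < 1, 0 < F z)
    (hF : ContinuousOn F (Iio 1)) (htop : Tendsto F (𝓝[<] 1) atTop) :
    Tendsto (fun t => F t / F (1 - t)) (𝓝[<] 1) atTop := by
  have hcont : ContinuousAt F 0 := hF.continuousAt (Iio_mem_nhds one_pos)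
  have hden : Tendsto (fun t => F (1 - t)) (𝓝[<] 1) (𝓝 (F 0)) :=
    hcont.tendsto.comp <|
      ((continuous_const.sub continuous_id).tendsto' 1 0 (sub_self 1)).mono_left nhdsWithin_le_nhds
  simpa only [div_eq_mul_inv] using
    htop.atTop_mul_pos (inv_pos.2 (hpos 0 one_pos)) (hden.inv₀ (hpos 0 one_pos).ne')

end ReflectionRatio

lemma ContinuousOn.surjOn_Ioi_of_tendsto {g : ℝ → ℝ} {a b l : ℝ} (hab : a < b)
    (hg : ContinuousOn g (Ioo a b)) (hlow : Tendsto g (𝓝[>] a) (𝓝 l))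
    (hhigh : Tendsto g (𝓝[<] b) atTop) : SurjOn g (Ioo a b) (Ioi l) := by
  intro r (hr : l < r)
  obtain ⟨s, hgs, hs⟩ := ((hlow.eventually (gt_mem_nhds hr)).and (Ioo_mem_nhdsGT hab)).exists
  obtain ⟨t, hgt, ht⟩ :=
    ((hhigh.eventually (eventually_ge_atTop r)).and (Ioo_mem_nhdsLT hab)).exists
  exact hg.surjOn_Icc hs ht ⟨hgs.le, hgt⟩

theorem stmt6 :
    StrictMonoOn fratio (Ioo (0:ℝ) 1) ∧
    ContinuousOn fratio (Ioo (0:ℝ) 1) ∧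
    Set.BijOn fratio (Ioo (0:ℝ) 1) (Ioi (0:ℝ)) ∧
    ∀ r : ℝ, 0 < r → ∃! t, t ∈ Ioo (0:ℝ) 1 ∧ fratio t = r := by
  have ha : (0:ℝ) < 1/3 := by norm_num
  have hb : (0:ℝ) < 2/3 := by norm_num
  have hcb : (2/3 : ℝ) < 1 := by norm_num
  have hpos : ∀ z < 1, 0 < hyp2F1 (1/3) (2/3) 1 z := fun z hz => hyp2F1_pos hb hcb hz
  have hcont := hyp2F1_continuousOn ha.le hb hcb
  have htop := tendsto_hyp2F1_nhdsLT_one ha.le hb hcb.le hcb (by norm_num)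
  have hmono : StrictMonoOn fratio (Ioo 0 1) :=
    strictMonoOn_div_comp_one_sub hpos (hyp2F1_strictMonoOn ha hb hcb)
  have hfcont : ContinuousOn fratio (Ioo 0 1) := continuousOn_div_comp_one_sub hpos hcont
  have hbij : BijOn fratio (Ioo 0 1) (Ioi 0) :=
    ⟨fun t ht => div_pos (hpos t ht.2) (hpos _ (by linarith [ht.1])), hmono.injOn,
      hfcont.surjOn_Ioi_of_tendsto one_pos (tendsto_div_comp_one_sub_nhdsGT_zero hcont htop)
        (tendsto_div_comp_one_sub_nhdsLT_one hpos hcont htop)⟩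
  refine ⟨hmono, hfcont, hbij, fun r hr => ?_⟩
  obtain ⟨t, ht, rfl⟩ := hbij.surjOn hr
  exact ⟨t, ⟨ht, rfl⟩, fun s ⟨hs, hst⟩ => hbij.injOn hs ht hst⟩
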